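/- Let I and R be positive integers, let η ∈ (0,1), and let A ∈ ℝ^{I×R} be any matrix. Let H ∈ ℝ^{I×I} be an orthogonal matrix all of whose entries have absolute value 1/√I (e.g., the normalized Hadamard transform), and for a sign vector d ∈ {−1,1}^I let D = diag(d). Then, for a uniformly random sign vector d (equivalently, for at least a (1−η)-fraction of the 2^I sign vectors d ∈ {−1,1}^I), with probability at least 1−η the coherence satisfies μ(H D A) ≤ 2 R ln(2 I R / η) / I. -/

import Mathlib

/-! For an orthogonal `Q`, the column space of `Q A` is the image under `Q` of that of `A`, so if
`(w_j)_{j < r}`, `r ≤ R`, is an orthonormal basis of the column space of `A`, then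
`ℓ_i(Q A) = ∑_j ((Q w_j)_i)²`. For `Q = H D` the entry `(H D w)_i = ∑_k d_k H_ik w_k` is a
Rademacher sum of variance `∑_k H_ik² w_k² = 1 / I`, so by Chernoff's bound (`cosh x ≤ exp (x²/2)`)
it exceeds `t = √(2 ln(2IR/η) / I)` in absolute value for at most an `η / (I R)`-fraction of the
sign vectors. A union bound over the `I r` pairs `(i, j)` leaves a `(1 - η)`-fraction of sign
vectors for which every leverage score is at most `r t² ≤ 2 R ln(2IR/η) / I`. -/

open Matrix

/-- The `i`-th leverage score of a real matrix `A`: the squared norm of the orthogonal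
projection of the `i`-th standard basis vector onto the column space of `A`. -/
noncomputable def levScore {m : Type*} [Fintype m] [DecidableEq m] {n : Type*} [Fintype n]
    (A : Matrix m n ℝ) (i : m) : ℝ :=
  ‖(Submodule.orthogonalProjectionOnto
      (Submodule.span ℝ (Set.range fun j : n => (EuclideanSpace.equiv m ℝ).symm (fun k => A k j))))
      (EuclideanSpace.single i 1)‖ ^ 2

/-- The coherence of a real matrix: the maximum leverage score. -/
noncomputable def coherence {m : Type*} [Fintype m] [DecidableEq m] {n : Type*} [Fintype n]
    (A : Matrix m n ℝ) : ℝ :=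
  ⨆ i, levScore A i

/-- The ±1 diagonal matrix associated with a Boolean sign vector. -/
noncomputable def signDiag {I : ℕ} (d : Fin I → Bool) : Matrix (Fin I) (Fin I) ℝ :=
  Matrix.diagonal fun i => if d i then (1 : ℝ) else -1

open Finset Real

noncomputable def boolSign (b : Bool) : ℝ := if b then 1 else -1

section Rademacher

variable {ι : Type*} [Fintype ι]

lemma sum_bool_exp_boolSign_mul_le (y : ℝ) :
    ∑ b : Bool, exp (boolSign b * y) ≤ 2 * exp (y ^ 2 / 2) := by
  have h := cosh_le_exp_half_sq y
  rw [cosh_eq] at h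
  simp only [Fintype.sum_bool, boolSign, if_true, Bool.false_eq_true, if_false, one_mul,
    neg_one_mul]
  linarith

lemma sum_exp_mul_sum_boolSign_le [DecidableEq ι] (x : ι → ℝ) (l : ℝ) :
    ∑ d : ι → Bool, exp (l * ∑ k, boolSign (d k) * x k)
      ≤ 2 ^ Fintype.card ι * exp (l ^ 2 * (∑ k, x k ^ 2) / 2) :=
  calc ∑ d : ι → Bool, exp (l * ∑ k, boolSign (d k) * x k)
      = ∏ k, ∑ b : Bool, exp (boolSign b * (l * x k)) := by
        rw [Fintype.prod_sum]
        refine sum_congr rfl fun d _ => ?_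
        rw [mul_sum, ← exp_sum]
        exact congrArg exp (sum_congr rfl fun k _ => by ring)
    _ ≤ ∏ k, 2 * exp ((l * x k) ^ 2 / 2) :=
        prod_le_prod (fun k _ => by positivity) fun k _ => sum_bool_exp_boolSign_mul_le _
    _ = 2 ^ Fintype.card ι * exp (l ^ 2 * (∑ k, x k ^ 2) / 2) := by
        rw [prod_mul_distrib, prod_const, card_univ, ← exp_sum, mul_sum, sum_div]
        simp only [mul_pow]

lemma card_filter_le_mul_exp_le_sum_exp {α : Type*} (s : Finset α) (f : α → ℝ) {l : ℝ}
    (hl : 0 ≤ l) (t : ℝ) :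
    #(s.filter fun a => t ≤ f a) * exp (l * t) ≤ ∑ a ∈ s, exp (l * f a) :=
  calc #(s.filter fun a => t ≤ f a) * exp (l * t)
      = ∑ _a ∈ s.filter fun a => t ≤ f a, exp (l * t) := by rw [sum_const, nsmul_eq_mul]
    _ ≤ ∑ a ∈ s.filter fun a => t ≤ f a, exp (l * f a) :=
        sum_le_sum fun a ha => exp_le_exp.mpr (by gcongr; exact (mem_filter.mp ha).2)
    _ ≤ ∑ a ∈ s, exp (l * f a) :=
        sum_le_sum_of_subset_of_nonneg (filter_subset _ _) fun _ _ _ => (exp_pos _).le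

lemma card_filter_le_sum_boolSign_le [DecidableEq ι] (x : ι → ℝ) {σ2 t : ℝ}
    (hσ : ∑ k, x k ^ 2 ≤ σ2) (hσ0 : 0 < σ2) (ht : 0 ≤ t) :
    #{d : ι → Bool | t ≤ ∑ k, boolSign (d k) * x k}
      ≤ 2 ^ Fintype.card ι * exp (-t ^ 2 / (2 * σ2)) := by
  -- Chernoff's bound at the optimal parameter `t / σ2`
  have hmgf := (card_filter_le_mul_exp_le_sum_exp univ
    (fun d : ι → Bool => ∑ k, boolSign (d k) * x k) (div_nonneg ht hσ0.le) t).trans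
    (sum_exp_mul_sum_boolSign_le x (t / σ2))
  have hexp : exp ((t / σ2) ^ 2 * (∑ k, x k ^ 2) / 2)
      ≤ exp (-t ^ 2 / (2 * σ2)) * exp (t / σ2 * t) := by
    rw [← exp_add, exp_le_exp,
      show -t ^ 2 / (2 * σ2) + t / σ2 * t = (t / σ2) ^ 2 * σ2 / 2 by field_simp; ring]
    gcongr
  refine le_of_mul_le_mul_right ?_ (exp_pos (t / σ2 * t))
  rw [mul_assoc]
  exact hmgf.trans (mul_le_mul_of_nonneg_left hexp (by positivity))

lemma card_filter_le_abs_sum_boolSign_le [DecidableEq ι] (x : ι → ℝ) {σ2 t : ℝ}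
    (hσ : ∑ k, x k ^ 2 ≤ σ2) (hσ0 : 0 < σ2) (ht : 0 ≤ t) :
    #{d : ι → Bool | t ≤ |∑ k, boolSign (d k) * x k|}
      ≤ 2 ^ Fintype.card ι * (2 * exp (-t ^ 2 / (2 * σ2))) := by
  have hsub : univ.filter (fun d : ι → Bool => t ≤ |∑ k, boolSign (d k) * x k|)
      ⊆ univ.filter (fun d : ι → Bool => t ≤ ∑ k, boolSign (d k) * x k) ∪
        univ.filter (fun d : ι → Bool => t ≤ ∑ k, boolSign (d k) * (-x) k) := by
    intro d hd
    simp only [mem_filter, mem_univ, true_and, mem_union, Pi.neg_apply, mul_neg, sum_neg_distrib]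
      at hd ⊢
    exact le_abs.mp hd
  have h₁ := card_filter_le_sum_boolSign_le x hσ hσ0 ht
  have h₂ := card_filter_le_sum_boolSign_le (-x) (by simpa using hσ) hσ0 ht
  have hcard : (#{d : ι → Bool | t ≤ |∑ k, boolSign (d k) * x k|} : ℝ)
      ≤ #{d : ι → Bool | t ≤ ∑ k, boolSign (d k) * x k}
        + #{d : ι → Bool | t ≤ ∑ k, boolSign (d k) * (-x) k} := by
    exact_mod_cast (card_le_card hsub).trans (card_union_le _ _)
  linarith

end Rademacher

lemma OrthonormalBasis.norm_orthogonalProjectionOnto_sq {𝕜 E ι : Type*} [RCLike 𝕜]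
    [NormedAddCommGroup E] [InnerProductSpace 𝕜 E] [Fintype ι] {K : Submodule 𝕜 E}
    [K.HasOrthogonalProjection] (b : OrthonormalBasis ι 𝕜 K) (x : E) :
    ‖K.orthogonalProjectionOnto x‖ ^ 2 = ∑ j, ‖(inner 𝕜 (b j : E) x : 𝕜)‖ ^ 2 := by
  simp only [← b.sum_sq_norm_inner_right, Submodule.inner_orthogonalProjectionOnto_eq_of_mem_left]

section LeverageScores

variable {m n : Type*} [Fintype m] [DecidableEq m]

def colSpace (A : Matrix m n ℝ) : Submodule ℝ (EuclideanSpace ℝ m) :=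
  Submodule.span ℝ (Set.range fun j : n => (EuclideanSpace.equiv m ℝ).symm (fun k => A k j))

lemma colSpace_mul (Q : Matrix m m ℝ) (A : Matrix m n ℝ) :
    colSpace (Q * A) = (colSpace A).map (toEuclideanLin Q) := by
  rw [colSpace, colSpace, Submodule.map_span, ← Set.range_comp]
  congr 2

variable [Fintype n]

lemma levScore_eq_sum_sq {ι : Type*} [Fintype ι] {A : Matrix m n ℝ}
    (b : OrthonormalBasis ι ℝ (colSpace A)) (i : m) :
    levScore A i = ∑ j, (b j : EuclideanSpace ℝ m) i ^ 2 := by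
  refine (b.norm_orthogonalProjectionOnto_sq _).trans ?_
  simp [EuclideanSpace.inner_single_right]

lemma levScore_mul_of_mem_orthogonalGroup {ι : Type*} [Fintype ι] {A : Matrix m n ℝ}
    (b : OrthonormalBasis ι ℝ (colSpace A)) {Q : Matrix m m ℝ} (hQ : Q ∈ orthogonalGroup m ℝ)
    (i : m) : levScore (Q * A) i = ∑ j, (Q *ᵥ b j) i ^ 2 := by
  let L : EuclideanSpace ℝ m ≃ₗᵢ[ℝ] EuclideanSpace ℝ m :=
    Unitary.linearIsometryEquiv ⟨toEuclideanCLM (𝕜 := ℝ) Q, Unitary.map_mem _ hQ⟩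
  have hL : (colSpace A).map (L.toLinearEquiv : _ →ₗ[ℝ] _) = colSpace (Q * A) := by
    rw [colSpace_mul]
    rfl
  exact levScore_eq_sum_sq
    (b.map ((L.submoduleMap (colSpace A)).trans (LinearIsometryEquiv.ofEq _ _ hL))) i

lemma coherence_mul_le_of_forall_abs_le [Nonempty m] {ι : Type*} [Fintype ι] {A : Matrix m n ℝ}
    (b : OrthonormalBasis ι ℝ (colSpace A)) {Q : Matrix m m ℝ} (hQ : Q ∈ orthogonalGroup m ℝ)
    {t : ℝ} (h : ∀ i j, |(Q *ᵥ b j) i| ≤ t) : coherence (Q * A) ≤ Fintype.card ι * t ^ 2 := by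
  refine ciSup_le fun i => ?_
  rw [levScore_mul_of_mem_orthogonalGroup b hQ i]
  calc ∑ j, (Q *ᵥ b j) i ^ 2 ≤ ∑ _j : ι, t ^ 2 :=
        Finset.sum_le_sum fun j _ => sq_le_sq' (abs_le.mp (h i j)).1 (abs_le.mp (h i j)).2
    _ = Fintype.card ι * t ^ 2 := by simp

end LeverageScores

lemma card_sub_le_card_filter_forall {α ι : Type*} [Fintype ι] (s : Finset α)
    (P : ι → α → Prop) [∀ i, DecidablePred (P i)] {ε : ℝ}
    (h : ∀ i, (#(s.filter fun a => ¬ P i a) : ℝ) ≤ ε) :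
    #s - Fintype.card ι * ε ≤ #(s.filter fun a => ∀ i, P i a) := by
  classical
  have hsub :
      s.filter (fun a => ¬ ∀ i, P i a) ⊆ univ.biUnion fun i => s.filter fun a => ¬ P i a := by
    intro a ha
    simp only [mem_filter, not_forall, mem_biUnion, mem_univ, true_and] at ha ⊢
    exact ha.2.imp fun i hi => ⟨ha.1, hi⟩
  have hbad : (#(s.filter fun a => ¬ ∀ i, P i a) : ℝ) ≤ Fintype.card ι * ε :=
    calc (#(s.filter fun a => ¬ ∀ i, P i a) : ℝ)
        ≤ ∑ i, (#(s.filter fun a => ¬ P i a) : ℝ) := by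
          exact_mod_cast (card_le_card hsub).trans card_biUnion_le
      _ ≤ Fintype.card ι * ε := by
          simpa using sum_le_sum fun i (_ : i ∈ univ) => h i
  have hsplit : (#s : ℝ) = #(s.filter fun a => ∀ i, P i a) + #(s.filter fun a => ¬ ∀ i, P i a) := by
    exact_mod_cast (card_filter_add_card_filter_not (s := s) (fun a => ∀ i, P i a)).symm
  linarith

lemma sum_sq_mul_of_abs_eq {ι : Type*} [Fintype ι] {h : ι → ℝ} {c : ℝ} (hc : ∀ k, |h k| = c)
    (v : ι → ℝ) : ∑ k, (h k * v k) ^ 2 = c ^ 2 * ∑ k, v k ^ 2 := by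
  simp only [mul_sum, mul_pow, ← sq_abs (h _), hc]

section SignDiag

variable {I : ℕ}

lemma boolSign_mul_self (b : Bool) : boolSign b * boolSign b = 1 := by
  cases b <;> norm_num [boolSign]

lemma signDiag_mem_orthogonalGroup (d : Fin I → Bool) :
    signDiag d ∈ orthogonalGroup (Fin I) ℝ := by
  rw [mem_orthogonalGroup_iff, signDiag, diagonal_transpose, diagonal_mul_diagonal]
  simpa only [← boolSign.eq_def, boolSign_mul_self] using diagonal_one

lemma mul_signDiag_mulVec_apply (H : Matrix (Fin I) (Fin I) ℝ) (d : Fin I → Bool)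
    (v : Fin I → ℝ) (i : Fin I) :
    ((H * signDiag d) *ᵥ v) i = ∑ k, boolSign (d k) * (H i k * v k) := by
  simp only [signDiag, mul_diagonal, mulVec, dotProduct, boolSign]
  exact sum_congr rfl fun k _ => by ring

variable {H : Matrix (Fin I) (Fin I) ℝ}

lemma card_filter_le_abs_mul_signDiag_mulVec_le (hI : 0 < I) (hHabs : ∀ i j, |H i j| = 1 / √I)
    {v : EuclideanSpace ℝ (Fin I)} (hv : ‖v‖ = 1) (i : Fin I) {t : ℝ} (ht : 0 ≤ t) :
    #{d : Fin I → Bool | t ≤ |((H * signDiag d) *ᵥ v) i|}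
      ≤ 2 ^ I * (2 * exp (-(I * t ^ 2) / 2)) := by
  have hvar : ∑ k, (H i k * v k) ^ 2 ≤ 1 / I := by
    rw [sum_sq_mul_of_abs_eq (hHabs i), ← EuclideanSpace.real_norm_sq_eq, hv, div_pow,
      sq_sqrt (Nat.cast_nonneg _)]
    simp
  have h := card_filter_le_abs_sum_boolSign_le _ hvar (by positivity) ht
  rw [Fintype.card_fin, show -t ^ 2 / (2 * (1 / I)) = -(I * t ^ 2) / 2 by field_simp] at h
  simpa only [mul_signDiag_mulVec_apply] using h

lemma sub_le_card_filter_forall_abs_mul_signDiag_mulVec_le (hI : 0 < I)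
    (hHabs : ∀ i j, |H i j| = 1 / √I) {ι : Type*} [Fintype ι] {w : ι → EuclideanSpace ℝ (Fin I)}
    (hw : ∀ j, ‖w j‖ = 1) {t : ℝ} (ht : 0 ≤ t) :
    2 ^ I - I * Fintype.card ι * (2 ^ I * (2 * exp (-(I * t ^ 2) / 2)))
      ≤ #{d : Fin I → Bool | ∀ i j, |((H * signDiag d) *ᵥ w j) i| ≤ t} := by
  have h := card_sub_le_card_filter_forall univ
    (fun (p : Fin I × ι) (d : Fin I → Bool) => |((H * signDiag d) *ᵥ w p.2) p.1| ≤ t)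
    (ε := 2 ^ I * (2 * exp (-(I * t ^ 2) / 2))) fun p => by
      refine le_trans ?_ (card_filter_le_abs_mul_signDiag_mulVec_le hI hHabs (hw p.2) p.1 ht)
      gcongr with d
      exact le_of_lt ∘ not_le.mp
  simpa [Prod.forall] using h

end SignDiag

/-- Coherence bound after a randomized Hadamard transform: for at least a `(1 - η)`-fraction
of the `2^I` sign vectors `d`, the coherence of `H D A` is at most `2 R ln(2 I R / η) / I`. -/
theorem coherence_randomizedHadamard (I R : ℕ) (hI : 0 < I) (hR : 0 < R)
    (η : ℝ) (hη0 : 0 < η) (hη1 : η < 1)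
    (A : Matrix (Fin I) (Fin R) ℝ)
    (H : Matrix (Fin I) (Fin I) ℝ)
    (hHorth : H * Hᵀ = 1)
    (hHabs : ∀ i j, |H i j| = 1 / Real.sqrt I) :
    (1 - η) * 2 ^ I ≤
      ((Finset.univ.filter fun d : Fin I → Bool =>
          coherence (H * signDiag d * A) ≤ 2 * R * Real.log (2 * I * R / η) / I).card : ℝ) := by
  have : Nonempty (Fin I) := ⟨⟨0, hI⟩⟩
  have hH : H ∈ orthogonalGroup (Fin I) ℝ := (mem_orthogonalGroup_iff _ _).mpr hHorth
  let b := stdOrthonormalBasis ℝ (colSpace A)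
  set r := Module.finrank ℝ (colSpace A)
  have hrR : (r : ℝ) ≤ R := by
    exact_mod_cast (finrank_range_le_card (R := ℝ) _).trans_eq (Fintype.card_fin R)
  set L := log (2 * I * R / η)
  have hIR : (1 : ℝ) ≤ I * R := by exact_mod_cast Nat.mul_pos hI hR
  have hL : 0 ≤ L := log_nonneg (by rw [le_div_iff₀ hη0]; linarith)
  set t := √(2 * L / I)
  have ht : t ^ 2 = 2 * L / I := sq_sqrt (by positivity)
  have hexp : 2 * exp (-(I * t ^ 2) / 2) = η / (I * R) := by
    rw [ht, show -(I * (2 * L / I)) / 2 = -L by field_simp, Real.exp_neg, exp_log (by positivity)]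
    field_simp
  calc (1 - η) * 2 ^ I = 2 ^ I - I * R * (2 ^ I * (η / (I * R))) := by field_simp
    _ ≤ 2 ^ I - I * Fintype.card (Fin r) * (2 ^ I * (2 * exp (-(I * t ^ 2) / 2))) := by
        rw [hexp, Fintype.card_fin]
        gcongr
    _ ≤ _ := sub_le_card_filter_forall_abs_mul_signDiag_mulVec_le hI hHabs
        (w := fun j => b j) b.orthonormal.1 (sqrt_nonneg _)
    _ ≤ _ := by
        gcongr with d
        intro hd
        calc coherence (H * signDiag d * A) ≤ r * t ^ 2 :=
              (coherence_mul_le_of_forall_abs_le b (mul_mem hH (signDiag_mem_orthogonalGroup d))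
                hd).trans_eq (by simp)
          _ ≤ R * t ^ 2 := by gcongr
          _ = 2 * R * L / I := by rw [ht]; ring
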